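/- Fix ε ∈ (0, 1/2] and integer d ≥ 1; let n = 2^{d+1} − 2, let f be the tree-connectivity function of the complete rooted binary tree of depth d with L = 2^d leaves, and let the n edge variables be independent with Pr[x_i = 1] = (1+ε)/2. Then there exists a leaf-last non-adaptive strategy S that, among all non-adaptive strategies, minimizes the conditional expected leaf cost given that at least one leaf is alive; and for any such S and every ℓ ∈ {1,…,L−1}, Pr[S first finds an alive leaf on its ℓ-th leaf test | at least one leaf is alive] ≥ Pr[S first finds an alive leaf on its (ℓ+1)-st leaf test | at least one leaf is alive]. -/

import Mathlib

open Finset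

/-- The set of tested indices `T` determines `f` on input `x`:
every input agreeing with `x` on `T` gives the same function value. -/
def Determines (n : ℕ) (f : (Fin n → Bool) → Bool) (T : Finset (Fin n))
    (x : Fin n → Bool) : Prop :=
  ∀ x' : Fin n → Bool, (∀ i ∈ T, x' i = x i) → f x' = f x

/-- The set of indices tested by the non-adaptive strategy `π` in its first `k` tests. -/
def prefixSet (n : ℕ) (π : Equiv.Perm (Fin n)) (k : ℕ) : Finset (Fin n) :=
  Finset.univ.filter (fun i => (π.symm i).val < k)

/-- The number of tests performed by the non-adaptive strategy `π` on input `x`: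
the least `k` such that the first `k` tested indices determine `f` on `x`. -/
noncomputable def naSteps (n : ℕ) (f : (Fin n → Bool) → Bool)
    (π : Equiv.Perm (Fin n)) (x : Fin n → Bool) : ℕ :=
  sInf {k : ℕ | Determines n f (prefixSet n π k) x}

/-- The cost incurred by the non-adaptive strategy `π` on input `x`, with cost vector `c`. -/
noncomputable def naCost (n : ℕ) (f : (Fin n → Bool) → Bool) (c : Fin n → ℝ)
    (π : Equiv.Perm (Fin n)) (x : Fin n → Bool) : ℝ :=
  ∑ i ∈ prefixSet n π (naSteps n f π x), c i

/-- Probability of the outcome `x` under the product distribution with parameters `p`. -/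
def prodWeight (n : ℕ) (p : Fin n → ℝ) (x : Fin n → Bool) : ℝ :=
  ∏ i : Fin n, if x i then p i else 1 - p i

/-- Expected cost of the non-adaptive strategy `π`. -/
noncomputable def naExpCost (n : ℕ) (f : (Fin n → Bool) → Bool) (c : Fin n → ℝ)
    (p : Fin n → ℝ) (π : Equiv.Perm (Fin n)) : ℝ :=
  ∑ x : Fin n → Bool, prodWeight n p x * naCost n f c π x

/-- Optimal expected cost among non-adaptive strategies. -/
noncomputable def OPTN (n : ℕ) (f : (Fin n → Bool) → Bool) (c : Fin n → ℝ)
    (p : Fin n → ℝ) : ℝ :=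
  sInf { r : ℝ | ∃ π : Equiv.Perm (Fin n), r = naExpCost n f c p π }

/-- Binary decision trees over `n` variables (adaptive strategies). -/
inductive DecTree (n : ℕ) : Type
  | leaf : Bool → DecTree n
  | node : Fin n → DecTree n → DecTree n → DecTree n

/-- Evaluation of a decision tree on an input. -/
def DecTree.eval {n : ℕ} : DecTree n → (Fin n → Bool) → Bool
  | .leaf b, _ => b
  | .node i t0 t1, x => if x i then DecTree.eval t1 x else DecTree.eval t0 x

/-- Cost of a decision tree on input `x`: the sum of the costs of the indices
labeling the internal nodes on the root-to-leaf path followed on `x`. -/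
def DecTree.costOn {n : ℕ} (c : Fin n → ℝ) : DecTree n → (Fin n → Bool) → ℝ
  | .leaf _, _ => 0
  | .node i t0 t1, x =>
      c i + (if x i then DecTree.costOn c t1 x else DecTree.costOn c t0 x)

/-- The decision tree `t` computes the function `f`. -/
def DecTree.Computes {n : ℕ} (t : DecTree n) (f : (Fin n → Bool) → Bool) : Prop :=
  ∀ x, t.eval x = f x

/-- Expected cost of an adaptive strategy (decision tree). -/
noncomputable def adExpCost (n : ℕ) (c : Fin n → ℝ) (p : Fin n → ℝ)
    (t : DecTree n) : ℝ :=
  ∑ x : Fin n → Bool, prodWeight n p x * DecTree.costOn c t x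

/-- Optimal expected cost among adaptive strategies computing `f`. -/
noncomputable def OPTA (n : ℕ) (f : (Fin n → Bool) → Bool) (c : Fin n → ℝ)
    (p : Fin n → ℝ) : ℝ :=
  sInf { r : ℝ | ∃ t : DecTree n, DecTree.Computes t f ∧ r = adExpCost n c p t }

/-- `f` is the monotone read-once DNF whose terms are the (nonempty, pairwise disjoint)
sets of variables `T 0, …, T (m-1)`. -/
def IsReadOnceDNF (n m : ℕ) (T : Fin m → Finset (Fin n))
    (f : (Fin n → Bool) → Bool) : Prop :=
  (∀ j, (T j).Nonempty) ∧
  (∀ j k, j ≠ k → Disjoint (T j) (T k)) ∧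
  (∀ x, f x = true ↔ ∃ j, ∀ i ∈ T j, x i = true)

/-- Nodes of the complete rooted binary tree of depth `d` are numbered `1, …, 2^(d+1)-1`,
with root `1` and the children of `v` being `2v` and `2v+1`; the edge joining a non-root
node `v` to its parent `v/2` is identified with the variable index `v - 2 ∈ Fin (2^(d+1)-2)`.
`edgeVal d x v` is the value of the edge above node `v`. -/
def edgeVal (d : ℕ) (x : Fin (2 ^ (d + 1) - 2) → Bool) (v : ℕ) : Bool :=
  if h : v - 2 < 2 ^ (d + 1) - 2 then x ⟨v - 2, h⟩ else false

/-- The leaf at node `v` (where `2^d ≤ v < 2^(d+1)`) is alive: every edge on the path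
from the root to `v` has value `1`. -/
def leafAlive (d : ℕ) (x : Fin (2 ^ (d + 1) - 2) → Bool) (v : ℕ) : Bool :=
  decide (∀ j ∈ Finset.range d, edgeVal d x (v / 2 ^ j) = true)

/-- The tree-connectivity function of the complete rooted binary tree of depth `d`:
true iff at least one leaf is alive. -/
def treeConn (d : ℕ) (x : Fin (2 ^ (d + 1) - 2) → Bool) : Bool :=
  decide (∃ v ∈ Finset.Ico ((2 : ℕ) ^ d) ((2 : ℕ) ^ (d + 1)), leafAlive d x v = true)

/-- The leaf edges of the tree: edges whose lower endpoint `i + 2` is a leaf node. -/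
def leafEdges (d : ℕ) : Finset (Fin (2 ^ (d + 1) - 2)) :=
  Finset.univ.filter (fun i => (2 : ℕ) ^ d ≤ (i : ℕ) + 2)

/-- A non-adaptive strategy is leaf-last if every internal edge precedes every leaf edge
in its testing order. -/
def IsLeafLast (d : ℕ) (π : Equiv.Perm (Fin (2 ^ (d + 1) - 2))) : Prop :=
  ∀ i j : Fin (2 ^ (d + 1) - 2),
    i ∉ leafEdges d → j ∈ leafEdges d → (π.symm i).val < (π.symm j).val

/-- The leaf cost of non-adaptive strategy `π` on input `x`: the number of leaf edges it
tests before stopping (tests on internal edges are free). -/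
noncomputable def leafCost (d : ℕ) (π : Equiv.Perm (Fin (2 ^ (d + 1) - 2)))
    (x : Fin (2 ^ (d + 1) - 2) → Bool) : ℕ :=
  ((prefixSet (2 ^ (d + 1) - 2) π (naSteps (2 ^ (d + 1) - 2) (treeConn d) π x)) ∩
    leafEdges d).card

/-- The conditional expectation of the leaf cost of `π`, given that at least one leaf is
alive, when the edges are independently alive with probability `(1+ε)/2`. -/
noncomputable def condExpLeafCost (d : ℕ) (ε : ℝ)
    (π : Equiv.Perm (Fin (2 ^ (d + 1) - 2))) : ℝ :=
  (∑ x : Fin (2 ^ (d + 1) - 2) → Bool,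
      prodWeight (2 ^ (d + 1) - 2) (fun _ => (1 + ε) / 2) x *
        (if treeConn d x then (leafCost d π x : ℝ) else 0)) /
  (∑ x : Fin (2 ^ (d + 1) - 2) → Bool,
      prodWeight (2 ^ (d + 1) - 2) (fun _ => (1 + ε) / 2) x *
        (if treeConn d x then 1 else 0))

/-- `π` first finds an alive leaf on its `l`-th leaf test on input `x`: the leaf incident
to the `l`-th leaf edge in the testing order of `π` is alive, and no leaf incident to an
earlier leaf edge in the order is alive. -/
def firstAliveAt (d : ℕ) (π : Equiv.Perm (Fin (2 ^ (d + 1) - 2))) (l : ℕ)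
    (x : Fin (2 ^ (d + 1) - 2) → Bool) : Bool :=
  decide (∃ i ∈ leafEdges d,
    ((leafEdges d).filter (fun j => (π.symm j).val < (π.symm i).val)).card = l - 1 ∧
    leafAlive d x ((i : ℕ) + 2) = true ∧
    ∀ j ∈ leafEdges d, (π.symm j).val < (π.symm i).val →
      leafAlive d x ((j : ℕ) + 2) = false)

/-- The conditional probability, given that at least one leaf is alive, that `π` first
finds an alive leaf on its `l`-th leaf test. -/
noncomputable def condProbFirstAliveAt (d : ℕ) (ε : ℝ)
    (π : Equiv.Perm (Fin (2 ^ (d + 1) - 2))) (l : ℕ) : ℝ :=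
  (∑ x : Fin (2 ^ (d + 1) - 2) → Bool,
      prodWeight (2 ^ (d + 1) - 2) (fun _ => (1 + ε) / 2) x *
        (if treeConn d x ∧ firstAliveAt d π l x then 1 else 0)) /
  (∑ x : Fin (2 ^ (d + 1) - 2) → Bool,
      prodWeight (2 ^ (d + 1) - 2) (fun _ => (1 + ε) / 2) x *
        (if treeConn d x then 1 else 0))

/-!
Sorting a strategy so that the internal edges come first, while keeping the order of its leaf
edges, never increases the leaf cost on an input with an alive leaf: the sorted strategy stops
as soon as it has tested an alive leaf edge, and all leaf edges it tested before are ones the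
original strategy tested too. Minimizing over the finitely many sorted strategies gives an
optimal leaf-last strategy.

For an optimal leaf-last `S`, let `E` be the event that none of the first `ℓ - 1` tested leaves
is alive, and `A`, `B` the events that the `ℓ`-th, resp. `(ℓ+1)`-st, tested leaf is alive.
Exchanging these two leaf tests raises the leaf cost by one on `E ∩ A ∩ Bᶜ` and lowers it by one
on `E ∩ Aᶜ ∩ B`, and nothing else changes. Optimality of `S` therefore gives
`Pr[first at ℓ+1] = Pr[E ∩ Aᶜ ∩ B] ≤ Pr[E ∩ A ∩ Bᶜ] ≤ Pr[E ∩ A] = Pr[first at ℓ]`.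
-/

section Strategy

variable {n : ℕ} {f : (Fin n → Bool) → Bool} {π : Equiv.Perm (Fin n)} {x : Fin n → Bool}

@[simp]
lemma mem_prefixSet {k : ℕ} {e : Fin n} : e ∈ prefixSet n π k ↔ (π.symm e : ℕ) < k := by
  simp [prefixSet]

lemma prefixSet_mono {k k' : ℕ} (h : k ≤ k') : prefixSet n π k ⊆ prefixSet n π k' :=
  fun e he => by rw [mem_prefixSet] at he ⊢; omega

lemma card_prefixSet {k : ℕ} (hk : k ≤ n) : #(prefixSet n π k) = k := by
  have : prefixSet n π k = (univ.filter fun i : Fin n => (i : ℕ) < k).map π.toEmbedding := by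
    ext e
    simp
  rw [this, card_map, Fin.card_filter_val_lt, min_eq_right hk]

lemma prefixSet_succ {k : ℕ} (hk : k < n) :
    prefixSet n π (k + 1) = insert (π ⟨k, hk⟩) (prefixSet n π k) := by
  ext e
  simp only [mem_prefixSet, mem_insert, ← Equiv.symm_apply_eq, Fin.ext_iff]
  omega

lemma prefixSet_swap_trans {a b : Fin n} (hab : (b : ℕ) = a + 1) {k : ℕ} (hk : k ≠ b) :
    prefixSet n ((Equiv.swap a b).trans π) k = prefixSet n π k := by
  ext e
  simp only [mem_prefixSet, Equiv.symm_trans_apply, Equiv.symm_swap]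
  rcases eq_or_ne (π.symm e) a with h | h
  · rw [h, Equiv.swap_apply_left]; omega
  rcases eq_or_ne (π.symm e) b with h' | h'
  · rw [h', Equiv.swap_apply_right]; omega
  · rw [Equiv.swap_apply_of_ne_of_ne h h']

lemma prefixSet_card_eq_of_forall_lt {s : Finset (Fin n)}
    (h : ∀ i ∈ s, ∀ j ∉ s, π.symm i < π.symm j) :
    prefixSet n π #s = s := by
  have hs : #s ≤ n := (card_le_univ s).trans_eq (Fintype.card_fin n)
  refine (eq_of_subset_of_card_le (s := s) (fun i hi => ?_) (card_prefixSet hs).le).symm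
  by_contra hlate
  rw [mem_prefixSet, not_lt] at hlate
  have hsub : prefixSet n π #s ⊆ s.erase i := fun j hj => by
    rw [mem_prefixSet] at hj
    refine mem_erase.2 ⟨by rintro rfl; omega, ?_⟩
    by_contra hjs
    have := Fin.lt_def.1 (h i hi j hjs)
    omega
  have := card_le_card hsub
  rw [card_prefixSet hs, card_erase_of_mem hi] at this
  have := card_pos.2 ⟨i, hi⟩
  omega

lemma Determines.mono {T T' : Finset (Fin n)} (h : Determines n f T x) (hT : T ⊆ T') :
    Determines n f T' x :=
  fun x' hx' => h x' fun i hi => hx' i (hT hi)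

lemma determines_prefixSet_naSteps : Determines n f (prefixSet n π (naSteps n f π x)) x :=
  Nat.sInf_mem (s := {k | Determines n f (prefixSet n π k) x})
    ⟨n, fun _ hx' => congrArg f (funext fun i => hx' i (mem_prefixSet.2 (π.symm i).isLt))⟩

lemma lt_naSteps_iff {k : ℕ} :
    k < naSteps n f π x ↔ ¬ Determines n f (prefixSet n π k) x :=
  ⟨fun hk hdet => (Nat.sInf_le hdet).not_gt hk, fun hk => lt_of_not_ge fun hle =>
    hk (determines_prefixSet_naSteps.mono (prefixSet_mono hle))⟩

open scoped Classical in
lemma card_prefixSet_naSteps_inter (L : Finset (Fin n)) :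
    #(prefixSet n π (naSteps n f π x) ∩ L) =
      ∑ i : Fin n, if π i ∈ L ∧ ¬ Determines n f (prefixSet n π i) x then 1 else 0 := by
  calc #(prefixSet n π (naSteps n f π x) ∩ L)
      = ∑ e, if e ∈ prefixSet n π (naSteps n f π x) ∩ L then 1 else 0 := by
        rw [← card_filter, filter_univ_mem]
    _ = _ := (Equiv.sum_comp π _).symm
    _ = _ := sum_congr rfl fun i _ => if_congr (by simp [lt_naSteps_iff, and_comm]) rfl rfl

open scoped Classical in
/-- Exchanging two adjacent tests of elements of `L` only changes whether the strategy has
stopped before the later position. -/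
lemma card_prefixSet_naSteps_inter_swap_trans {L : Finset (Fin n)} {a b : Fin n}
    (hab : (b : ℕ) = a + 1) (ha : π a ∈ L) (hb : π b ∈ L) :
    #(prefixSet n ((Equiv.swap a b).trans π) (naSteps n f ((Equiv.swap a b).trans π) x) ∩ L)
        + (if Determines n f (prefixSet n π b) x then 0 else 1) =
      #(prefixSet n π (naSteps n f π x) ∩ L)
        + (if Determines n f (prefixSet n ((Equiv.swap a b).trans π) b) x then 0 else 1) := by
  have hrest : ∀ i ∈ univ.erase b,
      (if ((Equiv.swap a b).trans π) i ∈ L ∧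
          ¬ Determines n f (prefixSet n ((Equiv.swap a b).trans π) i) x then 1 else 0) =
        if π i ∈ L ∧ ¬ Determines n f (prefixSet n π i) x then 1 else 0 := by
    intro i hi
    have hib : (i : ℕ) ≠ b := fun h => (mem_erase.1 hi).1 (Fin.ext h)
    rw [prefixSet_swap_trans hab hib, Equiv.trans_apply]
    rcases eq_or_ne i a with rfl | hia
    · simp [ha, hb]
    · rw [Equiv.swap_apply_of_ne_of_ne hia (mem_erase.1 hi).1]
  rw [card_prefixSet_naSteps_inter, card_prefixSet_naSteps_inter, ← add_sum_erase _ _ (mem_univ b),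
    ← add_sum_erase _ _ (mem_univ b), sum_congr rfl hrest]
  simp only [Equiv.trans_apply, Equiv.swap_apply_right, ha, hb, true_and]
  split_ifs <;> omega

end Strategy

section Tree

variable {d : ℕ} {x : Fin (2 ^ (d + 1) - 2) → Bool}

def HasAliveLeafEdge (d : ℕ) (x : Fin (2 ^ (d + 1) - 2) → Bool)
    (T : Finset (Fin (2 ^ (d + 1) - 2))) : Prop :=
  ∃ e ∈ T, e ∈ leafEdges d ∧ leafAlive d x (e + 2) = true

@[simp]
lemma mem_leafEdges {e : Fin (2 ^ (d + 1) - 2)} : e ∈ leafEdges d ↔ 2 ^ d ≤ (e : ℕ) + 2 := by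
  simp [leafEdges]

lemma card_compl_leafEdges (hd : 1 ≤ d) : #(leafEdges d)ᶜ = 2 ^ d - 2 := by
  have h2 : 2 ≤ 2 ^ d := Nat.le_self_pow (by omega) 2
  have h4 : 2 ^ (d + 1) = 2 * 2 ^ d := by rw [pow_succ']
  have : (leafEdges d)ᶜ = univ.filter fun i : Fin (2 ^ (d + 1) - 2) => (i : ℕ) < 2 ^ d - 2 := by
    ext i
    simp only [mem_compl, mem_leafEdges, mem_filter, mem_univ, true_and]
    omega
  rw [this, Fin.card_filter_val_lt]
  omega

lemma hasAliveLeafEdge_insert {e : Fin (2 ^ (d + 1) - 2)} {T : Finset (Fin (2 ^ (d + 1) - 2))} :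
    HasAliveLeafEdge d x (insert e T) ↔
      (e ∈ leafEdges d ∧ leafAlive d x (e + 2) = true) ∨ HasAliveLeafEdge d x T := by
  simp [HasAliveLeafEdge]

lemma leafAlive_mono {x' : Fin (2 ^ (d + 1) - 2) → Bool} (hx : ∀ i, x' i = true → x i = true)
    {v : ℕ} (h : leafAlive d x' v = true) : leafAlive d x v = true := by
  refine decide_eq_true fun j hj => ?_
  have := of_decide_eq_true h j hj
  simp only [edgeVal] at this ⊢
  split_ifs at this ⊢
  exact hx _ this

lemma apply_eq_true_of_leafAlive (hd : 1 ≤ d) {e : Fin (2 ^ (d + 1) - 2)}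
    (h : leafAlive d x (e + 2) = true) : x e = true := by
  have := of_decide_eq_true h 0 (mem_range.2 hd)
  simpa [edgeVal] using this

lemma leafAlive_congr {x' : Fin (2 ^ (d + 1) - 2) → Bool}
    {e : Fin (2 ^ (d + 1) - 2)} (h : ∀ i, i ∉ leafEdges d ∨ i = e → x' i = x i) :
    leafAlive d x' (e + 2) = leafAlive d x (e + 2) := by
  have h4 : 2 ^ (d + 1) = 2 * 2 ^ d := by rw [pow_succ']
  have hlt := e.isLt
  simp only [leafAlive, edgeVal]
  refine decide_eq_decide.2 (forall₂_congr fun j hj => ?_)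
  split_ifs with hi
  · rw [h]
    rcases Nat.eq_zero_or_pos j with rfl | hj0
    · right; ext; simp
    · left
      have hd2 : 4 ≤ 2 ^ d := by
        calc 4 = 2 ^ 2 := rfl
          _ ≤ 2 ^ d := Nat.pow_le_pow_right two_pos (by simp at hj; omega)
      have : ((e : ℕ) + 2) / 2 ^ j < 2 ^ d := by
        calc ((e : ℕ) + 2) / 2 ^ j ≤ ((e : ℕ) + 2) / 2 :=
              Nat.div_le_div_left (Nat.le_self_pow hj0.ne' 2) two_pos
          _ < 2 ^ d := by omega
      simp only [mem_leafEdges, not_le]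
      omega
  · rfl

lemma treeConn_eq_true_iff (hd : 1 ≤ d) :
    treeConn d x = true ↔ HasAliveLeafEdge d x univ := by
  have h2 : 2 ≤ 2 ^ d := Nat.le_self_pow (by omega) 2
  have h4 : 2 ^ (d + 1) = 2 * 2 ^ d := by rw [pow_succ']
  simp only [treeConn, decide_eq_true_eq, HasAliveLeafEdge, mem_univ, true_and, mem_Ico,
    mem_leafEdges]
  constructor
  · rintro ⟨v, ⟨hv1, hv2⟩, hv⟩
    refine ⟨⟨v - 2, by omega⟩, by simp; omega, ?_⟩
    simpa [Nat.sub_add_cancel (h2.trans hv1)] using hv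
  · rintro ⟨e, he, hv⟩
    exact ⟨e + 2, ⟨he, by omega⟩, hv⟩

lemma treeConn_const_true (hd : 1 ≤ d) : treeConn d (fun _ => true) = true := by
  have h2 : 2 ≤ 2 ^ d := Nat.le_self_pow (by omega) 2
  have h4 : 2 ^ (d + 1) = 2 * 2 ^ d := by rw [pow_succ']
  rw [treeConn_eq_true_iff hd]
  refine ⟨⟨2 ^ d - 2, by omega⟩, mem_univ _, by simp; omega, ?_⟩
  simp only [leafAlive, edgeVal, decide_eq_true_eq]
  intro j _
  rw [dif_pos]
  calc (2 ^ d - 2 + 2) / 2 ^ j - 2 ≤ 2 ^ d - 2 + 2 - 2 := by gcongr; exact Nat.div_le_self _ _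
    _ < 2 ^ (d + 1) - 2 := by omega

lemma HasAliveLeafEdge.of_determines (hd : 1 ≤ d) (hx : treeConn d x = true)
    {T : Finset (Fin (2 ^ (d + 1) - 2))} (h : Determines _ (treeConn d) T x) :
    HasAliveLeafEdge d x T := by
  classical
  let xT : Fin (2 ^ (d + 1) - 2) → Bool := fun i => x i && decide (i ∈ T)
  have hxT : treeConn d xT = true := by
    rw [h xT fun i hi => by simp [xT, hi]]
    exact hx
  obtain ⟨e, -, he, halive⟩ := (treeConn_eq_true_iff hd).1 hxT
  have heT := apply_eq_true_of_leafAlive hd halive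
  simp only [xT, Bool.and_eq_true, decide_eq_true_eq] at heT
  exact ⟨e, heT.2, he, leafAlive_mono (fun i hi => (Bool.and_eq_true _ _ ▸ hi).1) halive⟩

lemma determines_of_hasAliveLeafEdge (hd : 1 ≤ d) {T : Finset (Fin (2 ^ (d + 1) - 2))}
    (hT : ∀ i ∉ leafEdges d, i ∈ T) (h : HasAliveLeafEdge d x T) :
    Determines _ (treeConn d) T x := by
  obtain ⟨e, heT, he, halive⟩ := h
  intro x' hx'
  have halive' : leafAlive d x' (e + 2) = true := by
    rw [leafAlive_congr fun i hi => hx' i (hi.elim (hT i) (· ▸ heT))]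
    exact halive
  rw [(treeConn_eq_true_iff hd).2 ⟨e, mem_univ _, he, halive⟩,
    (treeConn_eq_true_iff hd).2 ⟨e, mem_univ _, he, halive'⟩]

lemma determines_iff_hasAliveLeafEdge (hd : 1 ≤ d) (hx : treeConn d x = true)
    {T : Finset (Fin (2 ^ (d + 1) - 2))} (hT : ∀ i ∉ leafEdges d, i ∈ T) :
    Determines _ (treeConn d) T x ↔ HasAliveLeafEdge d x T :=
  ⟨HasAliveLeafEdge.of_determines hd hx, determines_of_hasAliveLeafEdge hd hT⟩

end Tree

namespace IsLeafLast

variable {d : ℕ} {S : Equiv.Perm (Fin (2 ^ (d + 1) - 2))}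

lemma prefixSet_eq (hd : 1 ≤ d) (hS : IsLeafLast d S) :
    prefixSet _ S (2 ^ d - 2) = (leafEdges d)ᶜ := by
  rw [← card_compl_leafEdges hd]
  exact prefixSet_card_eq_of_forall_lt fun i hi j hj =>
    hS i j (mem_compl.1 hi) (not_not.1 (mem_compl.not.1 hj))

lemma mem_leafEdges_iff (hd : 1 ≤ d) (hS : IsLeafLast d S) {e : Fin (2 ^ (d + 1) - 2)} :
    e ∈ leafEdges d ↔ 2 ^ d - 2 ≤ (S.symm e : ℕ) := by
  rw [← not_lt, ← mem_prefixSet, hS.prefixSet_eq hd, mem_compl, not_not]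

lemma compl_leafEdges_subset_prefixSet (hd : 1 ≤ d) (hS : IsLeafLast d S) {k : ℕ}
    (hk : 2 ^ d - 2 ≤ k) : ∀ i ∉ leafEdges d, i ∈ prefixSet _ S k :=
  fun _ hi => prefixSet_mono hk (hS.prefixSet_eq hd ▸ mem_compl.2 hi)

lemma card_filter_leafEdges_lt (hd : 1 ≤ d) (hS : IsLeafLast d S) {p : ℕ}
    (hcp : 2 ^ d - 2 ≤ p) (hp : p ≤ 2 ^ (d + 1) - 2) :
    #((leafEdges d).filter fun j => (S.symm j : ℕ) < p) = p - (2 ^ d - 2) := by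
  have : (leafEdges d).filter (fun j => (S.symm j : ℕ) < p) =
      prefixSet _ S p \ prefixSet _ S (2 ^ d - 2) := by
    ext j
    simp only [mem_filter, mem_sdiff, hS.mem_leafEdges_iff hd, mem_prefixSet, not_lt]
    tauto
  rw [this, card_sdiff_of_subset (prefixSet_mono hcp), card_prefixSet hp,
    card_prefixSet (hcp.trans hp)]

/-- For a leaf-last strategy the `ℓ`-th leaf test is the test at position `2^d - 2 + ℓ - 1`. -/
lemma firstAliveAt_iff (hd : 1 ≤ d) (hS : IsLeafLast d S) {a : Fin (2 ^ (d + 1) - 2)}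
    (ha : 2 ^ d - 2 ≤ (a : ℕ)) {x : Fin (2 ^ (d + 1) - 2) → Bool} :
    firstAliveAt d S (a - (2 ^ d - 2) + 1) x = true ↔
      leafAlive d x (S a + 2) = true ∧ ¬ HasAliveLeafEdge d x (prefixSet _ S a) := by
  have hSa : S a ∈ leafEdges d := by rw [hS.mem_leafEdges_iff hd]; simpa using ha
  simp only [firstAliveAt, decide_eq_true_eq, HasAliveLeafEdge, mem_prefixSet, not_exists,
    not_and, Bool.not_eq_true]
  constructor
  · rintro ⟨i, hi, hcard, halive, hdead⟩
    have := (hS.mem_leafEdges_iff hd).1 hi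
    rw [hS.card_filter_leafEdges_lt hd this (S.symm i).isLt.le] at hcard
    obtain rfl : i = S a := S.symm_apply_eq.1 (Fin.ext (by omega))
    simp only [Equiv.symm_apply_apply] at hdead
    exact ⟨halive, fun j hj hjL => hdead j hjL hj⟩
  · rintro ⟨halive, hdead⟩
    refine ⟨S a, hSa, ?_, halive, fun j hjL hj => hdead j (by simpa using hj) hjL⟩
    rw [Equiv.symm_apply_apply, hS.card_filter_leafEdges_lt hd ha a.isLt.le]
    omega

lemma firstAliveAt_add_leafCost_swap_le (hd : 1 ≤ d) (hS : IsLeafLast d S)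
    {a b : Fin (2 ^ (d + 1) - 2)} (ha : 2 ^ d - 2 ≤ (a : ℕ)) (hab : (b : ℕ) = a + 1)
    (x : Fin (2 ^ (d + 1) - 2) → Bool) :
    (if treeConn d x ∧ firstAliveAt d S (b - (2 ^ d - 2) + 1) x then (1 : ℝ) else 0) +
        (if treeConn d x then (leafCost d ((Equiv.swap a b).trans S) x : ℝ) else 0) ≤
      (if treeConn d x ∧ firstAliveAt d S (a - (2 ^ d - 2) + 1) x then 1 else 0) +
        (if treeConn d x then (leafCost d S x : ℝ) else 0) := by
  classical
  by_cases hx : treeConn d x = true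
  swap
  · simp [hx]
  have hb : 2 ^ d - 2 ≤ (b : ℕ) := by omega
  have hSa : S a ∈ leafEdges d := (hS.mem_leafEdges_iff hd).2 (by simpa using ha)
  have hSb : S b ∈ leafEdges d := (hS.mem_leafEdges_iff hd).2 (by simpa using hb)
  have hinternal := hS.compl_leafEdges_subset_prefixSet hd ha
  have hprefix : prefixSet _ S b = insert (S a) (prefixSet _ S a) := by
    rw [hab, prefixSet_succ a.isLt]
  have hprefix' : prefixSet _ ((Equiv.swap a b).trans S) b = insert (S b) (prefixSet _ S a) := by
    rw [hab, prefixSet_succ a.isLt, prefixSet_swap_trans hab (by omega)]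
    simp
  have hswap := card_prefixSet_naSteps_inter_swap_trans (f := treeConn d) (x := x) hab hSa hSb
  rw [hprefix, hprefix', determines_iff_hasAliveLeafEdge hd hx fun i hi =>
      mem_insert_of_mem (hinternal i hi), determines_iff_hasAliveLeafEdge hd hx fun i hi =>
      mem_insert_of_mem (hinternal i hi)] at hswap
  simp only [hx, true_and, if_true, hS.firstAliveAt_iff hd ha, hS.firstAliveAt_iff hd hb,
    hprefix, hasAliveLeafEdge_insert, hSa, hSb] at hswap ⊢
  unfold leafCost
  cases hA : leafAlive d x (S a + 2) <;> cases hB : leafAlive d x (S b + 2) <;>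
    by_cases hE : HasAliveLeafEdge d x (prefixSet _ S a) <;> simp [hA, hB, hE] at hswap ⊢ <;>
    norm_cast <;> omega

end IsLeafLast

lemma Tuple.sort_symm_lt_of_lt {n : ℕ} {α : Type*} [LinearOrder α] {f : Fin n → α} {i j : Fin n}
    (h : f i < f j) : (Tuple.sort f).symm i < (Tuple.sort f).symm j := by
  by_contra hle
  have := Tuple.monotone_sort f (not_lt.1 hle)
  simp only [Function.comp_apply, Equiv.apply_symm_apply] at this
  exact this.not_gt h

section LeafLastSort

variable {d : ℕ}

/-- Sorting by this key puts the internal edges first and keeps the order of `π` within the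
internal and within the leaf edges. -/
def leafLastSort (d : ℕ) (π : Equiv.Perm (Fin (2 ^ (d + 1) - 2))) :
    Equiv.Perm (Fin (2 ^ (d + 1) - 2)) :=
  Tuple.sort fun e => (if e ∈ leafEdges d then 2 ^ (d + 1) - 2 else 0) + (π.symm e : ℕ)

lemma isLeafLast_leafLastSort (π : Equiv.Perm (Fin (2 ^ (d + 1) - 2))) :
    IsLeafLast d (leafLastSort d π) := by
  intro i j hi hj
  refine Fin.lt_def.1 (Tuple.sort_symm_lt_of_lt ?_)
  simp only [if_neg hi, if_pos hj]
  omega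

lemma leafLastSort_symm_lt {π : Equiv.Perm (Fin (2 ^ (d + 1) - 2))} {i j : Fin (2 ^ (d + 1) - 2)}
    (hi : i ∈ leafEdges d) (hj : j ∈ leafEdges d) (h : (π.symm i : ℕ) < π.symm j) :
    ((leafLastSort d π).symm i : ℕ) < (leafLastSort d π).symm j := by
  refine Fin.lt_def.1 (Tuple.sort_symm_lt_of_lt ?_)
  simp only [if_pos hi, if_pos hj]
  omega

/-- Once `S` has tested an alive leaf edge that `π` tested before stopping, it stops too, and
up to that point it has only tested leaf edges that `π` tested. -/
lemma leafCost_le_of_isLeafLast (hd : 1 ≤ d) {S π : Equiv.Perm (Fin (2 ^ (d + 1) - 2))}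
    (hS : IsLeafLast d S)
    (hord : ∀ i ∈ leafEdges d, ∀ j ∈ leafEdges d,
      (π.symm i : ℕ) < π.symm j → (S.symm i : ℕ) < S.symm j)
    {x : Fin (2 ^ (d + 1) - 2) → Bool} (hx : treeConn d x = true) :
    leafCost d S x ≤ leafCost d π x := by
  obtain ⟨e, heπ, he, halive⟩ :=
    HasAliveLeafEdge.of_determines hd hx (determines_prefixSet_naSteps (π := π))
  have hstop : naSteps _ (treeConn d) S x ≤ S.symm e + 1 :=
    Nat.sInf_le <| determines_of_hasAliveLeafEdge hd
      (fun i hi => mem_prefixSet.2 ((hS i e hi he).trans (Nat.lt_succ_self _)))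
      ⟨e, mem_prefixSet.2 (Nat.lt_succ_self _), he, halive⟩
  calc leafCost d S x ≤ #(prefixSet _ S (S.symm e + 1) ∩ leafEdges d) :=
        card_le_card (inter_subset_inter_right (prefixSet_mono hstop))
    _ ≤ leafCost d π x := card_le_card fun j hj => by
        obtain ⟨hjS, hj⟩ := mem_inter.1 hj
        rw [mem_prefixSet] at hjS heπ
        have := mt (hord e he j hj)
        exact mem_inter.2 ⟨mem_prefixSet.2 (by omega), hj⟩

lemma leafCost_leafLastSort_le (hd : 1 ≤ d) (π : Equiv.Perm (Fin (2 ^ (d + 1) - 2)))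
    {x : Fin (2 ^ (d + 1) - 2) → Bool} (hx : treeConn d x = true) :
    leafCost d (leafLastSort d π) x ≤ leafCost d π x :=
  leafCost_le_of_isLeafLast hd (isLeafLast_leafLastSort π)
    (fun _ hi _ hj => leafLastSort_symm_lt hi hj) hx

end LeafLastSort

lemma prodWeight_nonneg {n : ℕ} {p : Fin n → ℝ} (hp0 : ∀ i, 0 ≤ p i) (hp1 : ∀ i, p i ≤ 1)
    (x : Fin n → Bool) : 0 ≤ prodWeight n p x :=
  prod_nonneg fun i _ => by split_ifs <;> linarith [hp0 i, hp1 i]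

section Weighted

variable {d : ℕ} {ε : ℝ}

lemma prodWeight_one_add_div_two_nonneg (hε0 : -1 < ε) (hε1 : ε ≤ 1)
    (x : Fin (2 ^ (d + 1) - 2) → Bool) :
    0 ≤ prodWeight _ (fun _ => (1 + ε) / 2) x :=
  prodWeight_nonneg (fun _ => by linarith) (fun _ => by linarith) x

lemma sum_prodWeight_treeConn_pos (hd : 1 ≤ d) (hε0 : -1 < ε) (hε1 : ε ≤ 1) :
    0 < ∑ x : Fin (2 ^ (d + 1) - 2) → Bool,
      prodWeight _ (fun _ => (1 + ε) / 2) x * (if treeConn d x then 1 else 0) := by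
  refine sum_pos' (fun x _ => mul_nonneg (prodWeight_one_add_div_two_nonneg hε0 hε1 x)
    (by split_ifs <;> simp)) ⟨fun _ => true, mem_univ _, ?_⟩
  rw [treeConn_const_true hd, if_pos rfl, mul_one]
  exact prod_pos fun _ _ => by simp only [if_true]; linarith

lemma condExpLeafCost_le_of_leafCost_le (hd : 1 ≤ d) (hε0 : -1 < ε) (hε1 : ε ≤ 1)
    {π π' : Equiv.Perm (Fin (2 ^ (d + 1) - 2))}
    (h : ∀ x, treeConn d x = true → leafCost d π x ≤ leafCost d π' x) :
    condExpLeafCost d ε π ≤ condExpLeafCost d ε π' := by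
  refine div_le_div_of_nonneg_right (sum_le_sum fun x _ => ?_)
    (sum_prodWeight_treeConn_pos hd hε0 hε1).le
  refine mul_le_mul_of_nonneg_left ?_ (prodWeight_one_add_div_two_nonneg hε0 hε1 x)
  split_ifs with hx
  · exact_mod_cast h x hx
  · rfl

lemma exists_isLeafLast_forall_condExpLeafCost_le (hd : 1 ≤ d) (hε0 : -1 < ε) (hε1 : ε ≤ 1) :
    ∃ S : Equiv.Perm (Fin (2 ^ (d + 1) - 2)), IsLeafLast d S ∧
      ∀ π, condExpLeafCost d ε S ≤ condExpLeafCost d ε π := by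
  obtain ⟨π₀, -, hπ₀⟩ :=
    exists_min_image univ (fun π => condExpLeafCost d ε (leafLastSort d π)) univ_nonempty
  exact ⟨leafLastSort d π₀, isLeafLast_leafLastSort π₀, fun π => (hπ₀ π (mem_univ π)).trans
    (condExpLeafCost_le_of_leafCost_le hd hε0 hε1 fun _ hx => leafCost_leafLastSort_le hd π hx)⟩

lemma IsLeafLast.condProbFirstAliveAt_succ_le (hd : 1 ≤ d) (hε0 : -1 < ε) (hε1 : ε ≤ 1)
    {S : Equiv.Perm (Fin (2 ^ (d + 1) - 2))} (hS : IsLeafLast d S)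
    (hopt : ∀ π, condExpLeafCost d ε S ≤ condExpLeafCost d ε π)
    {l : ℕ} (hl1 : 1 ≤ l) (hl2 : l ≤ 2 ^ d - 1) :
    condProbFirstAliveAt d ε S (l + 1) ≤ condProbFirstAliveAt d ε S l := by
  have h4 : 2 ^ (d + 1) = 2 * 2 ^ d := by rw [pow_succ']
  let a : Fin (2 ^ (d + 1) - 2) := ⟨2 ^ d - 2 + l - 1, by omega⟩
  let b : Fin (2 ^ (d + 1) - 2) := ⟨2 ^ d - 2 + l, by omega⟩
  have hla : l = a - (2 ^ d - 2) + 1 := by simp only [a]; omega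
  have hlb : l + 1 = b - (2 ^ d - 2) + 1 := by simp only [b]; omega
  have hpoint := hS.firstAliveAt_add_leafCost_swap_le hd (a := a) (b := b)
    (by simp only [a]; omega) (by simp only [a, b]; omega)
  rw [← hla, ← hlb] at hpoint
  have hD := sum_prodWeight_treeConn_pos hd hε0 hε1
  have hswap := hopt ((Equiv.swap a b).trans S)
  unfold condExpLeafCost at hswap
  unfold condProbFirstAliveAt
  rw [div_le_div_iff_of_pos_right hD] at hswap ⊢
  have hsum := sum_le_sum fun x (_ : x ∈ univ) =>
    mul_le_mul_of_nonneg_left (hpoint x) (prodWeight_one_add_div_two_nonneg hε0 hε1 x)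
  simp only [mul_add, sum_add_distrib] at hsum
  linarith

end Weighted

/-- There is a leaf-last non-adaptive strategy `S` minimizing, among all non-adaptive
strategies, the conditional expected leaf cost given that at least one leaf is alive;
and for any such `S` and every `ℓ ∈ {1, …, L-1}` (where `L = 2^d` is the number of
leaves), the conditional probability that `S` first finds an alive leaf on its `ℓ`-th
leaf test is at least the conditional probability that it first finds an alive leaf on
its `(ℓ+1)`-st leaf test. -/
theorem stmt8 (ε : ℝ) (hε0 : 0 < ε) (hε1 : ε ≤ 1/2) (d : ℕ) (hd : 1 ≤ d) :
    (∃ S : Equiv.Perm (Fin (2 ^ (d + 1) - 2)), IsLeafLast d S ∧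
        ∀ π : Equiv.Perm (Fin (2 ^ (d + 1) - 2)),
          condExpLeafCost d ε S ≤ condExpLeafCost d ε π) ∧
    ∀ S : Equiv.Perm (Fin (2 ^ (d + 1) - 2)), IsLeafLast d S →
      (∀ π : Equiv.Perm (Fin (2 ^ (d + 1) - 2)),
          condExpLeafCost d ε S ≤ condExpLeafCost d ε π) →
      ∀ l : ℕ, 1 ≤ l → l ≤ 2 ^ d - 1 →
        condProbFirstAliveAt d ε S (l + 1) ≤ condProbFirstAliveAt d ε S l := by
  have hε0' : -1 < ε := by linarith
  have hε1' : ε ≤ 1 := by linarith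
  exact ⟨exists_isLeafLast_forall_condExpLeafCost_le hd hε0' hε1',
    fun S hS hopt _ hl1 hl2 => hS.condProbFirstAliveAt_succ_le hd hε0' hε1' hopt hl1 hl2⟩
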